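/- For non-integer rational k = p/q in lowest terms with q ≥ 2, and for every l with 1 ≤ l < q, the only admissible azimuthal quantum number is m = 0; hence the degeneracy is 1 < 2l + 1. -/
import Mathlib


/-- For non-integer rational `k = p/q` in lowest terms with `q ≥ 2` and `1 ≤ l < q`,
the only admissible azimuthal quantum number is `m = 0`; the degeneracy is `1 < 2l+1`. -/
theorem degeneracy_small_l (p q l : ℕ) (hp : 0 < p) (hq : 2 ≤ q)
    (hpq : Nat.Coprime p q) (hl : 1 ≤ l) (hlq : l < q) :
    ({m : ℤ | (∃ j : ℤ, (m : ℝ) * q / p = (j : ℝ)) ∧ |(m : ℝ) * q / p| ≤ l} = {0}) ∧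
      1 < 2 * l + 1 := by
  have hp' : (p : ℝ) ≠ 0 := by positivity
  constructor
  · ext m
    simp only [Set.mem_setOf_eq, Set.mem_singleton_iff]
    constructor
    · rintro ⟨⟨j, hj⟩, hle⟩
      have hmq : (m : ℝ) * q = j * p := by
        field_simp at hj; linarith
      have hz : m * q = j * p := by exact_mod_cast hmq
      have hdvd : (p : ℤ) ∣ m := by
        have hco : IsCoprime (p : ℤ) (q : ℤ) := by
          rw [Int.isCoprime_iff_gcd_eq_one]; exact_mod_cast hpq
        exact hco.dvd_of_dvd_mul_right ⟨j, by linarith⟩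
      obtain ⟨t, ht⟩ := hdvd
      have hval : (m : ℝ) * q / p = t * q := by
        rw [ht]; push_cast; field_simp
      rw [hval] at hle
      have ht0 : t = 0 := by
        by_contra h
        have h1 : (1 : ℝ) ≤ |(t : ℝ)| := by
          have : 1 ≤ |t| := Int.one_le_abs (by omega)
          exact_mod_cast this
        have : (q : ℝ) ≤ |(t : ℝ) * q| := by
          rw [abs_mul, abs_of_nonneg (by positivity : (0:ℝ) ≤ (q:ℝ))]
          nlinarith
        have hlq' : (l : ℝ) < q := by exact_mod_cast hlq
        linarith
      simp [ht, ht0]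
    · rintro rfl
      refine ⟨⟨0, by simp⟩, by simp⟩
  · omega
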